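/- arXiv:0707.1110 — 8 statements merged into one kernel-verified Lean document; each statement's English description precedes it below -/
import Mathlib

section
/- Let q be a prime power, let d, r > 0 be integers with d dividing q−1, and let h ∈ F_q[x]. Then f(x) := x^r · h(x^{(q−1)/d}) is a permutation polynomial of F_q if and only if both (1) gcd(r, (q−1)/d) = 1 and (2) the map ζ ↦ ζ^r · h(ζ)^{(q−1)/d} is a bijection of μ_d (note that μ_d ⊆ F_q since d divides q−1). -/
/-!
Write `s = (q - 1) / d`. The power map `c ↦ c ^ s` sends `Fˣ` onto `μ_d` (the unit group is
cyclic of order `s * d`), and it intertwines `f = x ^ r * h(x ^ s)` with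
`g = ζ ^ r * h(ζ) ^ s`: `g (c ^ s) = f c ^ s`. As `f 0 = 0`, everything happens on `Fˣ`.
If `g` permutes `μ_d` and `f a = f b`, then `a ^ s = b ^ s`, hence `a ^ r = b ^ r`, and
`gcd(r, s) = 1` forces `a = b`. Conversely, if `f` is a permutation, the intertwining makes `g`
a surjection of `μ_d`, and a root of unity `ε ≠ 1` of prime order `p ∣ gcd(r, s)` would satisfy
`f ε = f 1`.
-/

open Polynomial

theorem IsCyclic.range_powMonoidHom_eq_ker {G : Type*} [CommGroup G] [IsCyclic G] [Finite G]
    {s d : ℕ} (hG : Nat.card G = s * d) :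
    (powMonoidHom s : G →* G).range = (powMonoidHom d).ker := by
  have hs : s ≠ 0 := left_ne_zero_of_mul (hG ▸ Nat.card_pos.ne')
  refine Subgroup.eq_of_le_of_card_ge ?_ ?_
  · rintro _ ⟨x, rfl⟩
    simp [← pow_mul, ← hG, pow_card_eq_one']
  · rw [IsCyclic.card_powMonoidHom_range, IsCyclic.card_powMonoidHom_ker, hG,
      Nat.gcd_mul_right_left, Nat.gcd_mul_left_left,
      Nat.mul_div_cancel_left _ (Nat.pos_of_ne_zero hs)]

theorem eq_of_pow_eq_of_pow_eq_of_coprime {G₀ : Type*} [CommGroupWithZero G₀] {r s : ℕ}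
    (hrs : r.Coprime s) {a b : G₀} (hb : b ≠ 0) (hr : a ^ r = b ^ r) (hs : a ^ s = b ^ s) :
    a = b := by
  rw [← div_eq_one_iff_eq hb, ← pow_eq_one_iff_of_coprime hrs, div_pow, div_pow, hr, hs,
    div_self (pow_ne_zero _ hb), div_self (pow_ne_zero _ hb)]
  exact ⟨rfl, rfl⟩

theorem pow_mul_eval_pow_pow {R : Type*} [CommRing R] (h : R[X]) (r s : ℕ) (c : R) :
    (c ^ s) ^ r * h.eval (c ^ s) ^ s = (c ^ r * h.eval (c ^ s)) ^ s := by
  ring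

namespace FiniteField

variable {F : Type*} [Field F] [Fintype F] {r s d : ℕ}

theorem ne_zero_of_mul_eq_card_sub_one (hsd : s * d = Fintype.card F - 1) : s ≠ 0 ∧ d ≠ 0 :=
  mul_ne_zero_iff.mp (hsd ▸ (Nat.sub_pos_of_lt Fintype.one_lt_card).ne')

theorem pow_pow_eq_one (hsd : s * d = Fintype.card F - 1) {c : F} (hc : c ≠ 0) :
    (c ^ s) ^ d = 1 := by
  rw [← pow_mul, hsd]
  exact pow_card_sub_one_eq_one c hc

theorem exists_pow_eq_of_pow_eq_one (hsd : s * d = Fintype.card F - 1) {ζ : F}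
    (hζ : ζ ^ d = 1) : ∃ c ≠ 0, c ^ s = ζ := by
  classical
  have hd := (ne_zero_of_mul_eq_card_sub_one hsd).2
  have hζ0 : ζ ≠ 0 := by
    rintro rfl
    exact hd (zero_pow_eq_one₀.mp hζ)
  have hmem : Units.mk0 ζ hζ0 ∈ (powMonoidHom d : Fˣ →* Fˣ).ker := by
    simp [Units.ext_iff, hζ]
  have hcard : Nat.card Fˣ = s * d := by
    rw [Nat.card_eq_fintype_card, Fintype.card_units, hsd]
  rw [← IsCyclic.range_powMonoidHom_eq_ker hcard] at hmem
  obtain ⟨c, hc⟩ := hmem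
  exact ⟨c, c.ne_zero, by simpa [Units.ext_iff] using hc⟩

theorem coprime_of_injective_pow_mul_eval_pow (h : F[X]) (hs : s ∣ Fintype.card F - 1)
    (hf : Function.Injective fun c : F => c ^ r * h.eval (c ^ s)) : r.Coprime s := by
  classical
  by_contra hne
  obtain ⟨p, hp, hpg⟩ := Nat.exists_prime_and_dvd hne
  have : Fact p.Prime := ⟨hp⟩
  have hpG : p ∣ Fintype.card Fˣ := by
    rw [Fintype.card_units]
    exact hpg.trans ((Nat.gcd_dvd_right r s).trans hs)
  obtain ⟨ε, hε⟩ := exists_prime_orderOf_dvd_card p hpG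
  have hε_pow : ∀ n, p ∣ n → (ε : F) ^ n = 1 := fun n hn => by
    rw [← Units.val_pow_eq_pow_val, orderOf_dvd_iff_pow_eq_one.mp (hε ▸ hn), Units.val_one]
  have hε1 : (ε : F) = 1 :=
    hf (by simp [hε_pow r (hpg.trans (Nat.gcd_dvd_left r s)),
      hε_pow s (hpg.trans (Nat.gcd_dvd_right r s))])
  exact hp.one_lt.ne' (hε ▸ orderOf_eq_one_iff.mpr (Units.ext hε1))

theorem bijOn_pow_mul_pow_eval_of_bijective (h : F[X]) (hsd : s * d = Fintype.card F - 1)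
    (hr : r ≠ 0)
    (hf : Function.Bijective fun c : F => c ^ r * h.eval (c ^ s)) :
    Set.BijOn (fun ζ : F => ζ ^ r * h.eval ζ ^ s) {ζ | ζ ^ d = 1} {ζ | ζ ^ d = 1} := by
  have hf0 : ∀ {c : F}, c ^ r * h.eval (c ^ s) = 0 ↔ c = 0 := fun {c} => by
    have h0 : (0 : F) ^ r * h.eval (0 ^ s) = 0 := by simp [hr]
    exact ⟨fun hc => hf.injective (hc.trans h0.symm), fun hc => hc ▸ h0⟩
  have hmaps :
      Set.MapsTo (fun ζ : F => ζ ^ r * h.eval ζ ^ s) {ζ | ζ ^ d = 1} {ζ | ζ ^ d = 1} := by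
    intro ζ hζ
    obtain ⟨c, hc, rfl⟩ := exists_pow_eq_of_pow_eq_one hsd hζ
    show ((c ^ s) ^ r * h.eval (c ^ s) ^ s) ^ d = 1
    rw [pow_mul_eval_pow_pow]
    exact pow_pow_eq_one hsd (hf0.not.mpr hc)
  refine (Set.Finite.surjOn_iff_bijOn_of_mapsTo (Set.toFinite _) hmaps).mp fun η hη => ?_
  obtain ⟨b, hb, rfl⟩ := exists_pow_eq_of_pow_eq_one hsd hη
  obtain ⟨c, rfl⟩ := hf.surjective b
  exact ⟨c ^ s, pow_pow_eq_one hsd (mt hf0.mpr hb), pow_mul_eval_pow_pow h r s c⟩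

theorem injective_pow_mul_eval_pow_of_bijOn (h : F[X]) (hsd : s * d = Fintype.card F - 1)
    (hr : r ≠ 0) (hrs : r.Coprime s)
    (hg : Set.BijOn (fun ζ : F => ζ ^ r * h.eval ζ ^ s) {ζ | ζ ^ d = 1} {ζ | ζ ^ d = 1}) :
    Function.Injective fun c : F => c ^ r * h.eval (c ^ s) := by
  obtain ⟨hs, hd⟩ := ne_zero_of_mul_eq_card_sub_one hsd
  -- `h` has no zero on `μ_d`, since `ζ ↦ ζ ^ r * h.eval ζ ^ s` maps `μ_d` into `μ_d ∌ 0`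
  have heval : ∀ {c : F}, c ≠ 0 → h.eval (c ^ s) ≠ 0 := fun {c} hc h0 => by
    have := hg.mapsTo (pow_pow_eq_one hsd hc)
    simp [h0, hs, hd] at this
  have hf0 : ∀ {c : F}, c ^ r * h.eval (c ^ s) = 0 ↔ c = 0 := fun {c} => by
    refine ⟨fun hc => ?_, fun hc => by simp [hc, hr]⟩
    by_contra hc0
    exact mul_ne_zero (pow_ne_zero r hc0) (heval hc0) hc
  intro a b hab
  simp only at hab
  by_cases hb : b = 0
  · subst hb
    exact hf0.mp (hab.trans (hf0.mpr rfl))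
  have ha : a ≠ 0 := fun ha => hb (hf0.mp (hab.symm.trans (hf0.mpr ha)))
  have hs_eq : a ^ s = b ^ s := hg.injOn (pow_pow_eq_one hsd ha) (pow_pow_eq_one hsd hb) (by
    simp only [pow_mul_eval_pow_pow, hab])
  rw [hs_eq] at hab
  exact eq_of_pow_eq_of_pow_eq_of_coprime hrs hb (mul_right_cancel₀ (heval hb) hab) hs_eq

end FiniteField

theorem stmt_0_general {F : Type*} [Field F] [Fintype F] {q : ℕ} (hq : Fintype.card F = q)
    {d r : ℕ} (hr : 0 < r) (hdvd : d ∣ q - 1) (h : F[X]) :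
    Function.Bijective (fun c : F => (X ^ r * h.comp (X ^ ((q - 1) / d))).eval c) ↔
      (Nat.gcd r ((q - 1) / d) = 1 ∧
        Set.BijOn (fun ζ : F => ζ ^ r * h.eval ζ ^ ((q - 1) / d))
          {ζ : F | ζ ^ d = 1} {ζ : F | ζ ^ d = 1}) := by
  have hsd : (q - 1) / d * d = Fintype.card F - 1 := by
    rw [hq, Nat.div_mul_cancel hdvd]
  simp only [eval_mul, eval_pow, eval_X, eval_comp]
  constructor
  · intro hf
    exact ⟨FiniteField.coprime_of_injective_pow_mul_eval_pow h (Dvd.intro _ hsd) hf.injective,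
      FiniteField.bijOn_pow_mul_pow_eval_of_bijective h hsd hr.ne' hf⟩
  · rintro ⟨hrs, hg⟩
    exact Finite.injective_iff_bijective.mp
      (FiniteField.injective_pow_mul_eval_pow_of_bijOn h hsd hr.ne' hrs hg)

/-- Let q be a prime power, let d, r > 0 be integers with d dividing q−1, and let
h ∈ F_q[x]. Then f(x) := x^r · h(x^{(q−1)/d}) is a permutation polynomial of F_q if and
only if both (1) gcd(r, (q−1)/d) = 1 and (2) the map ζ ↦ ζ^r · h(ζ)^{(q−1)/d} is a
bijection of μ_d (note μ_d ⊆ F_q since d ∣ q−1). -/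
theorem stmt_0 {F : Type*} [Field F] [Fintype F] {q : ℕ} (hq : Fintype.card F = q)
    {d r : ℕ} (hd : 0 < d) (hr : 0 < r) (hdvd : d ∣ q - 1) (h : F[X]) :
    Function.Bijective (fun c : F => (X ^ r * h.comp (X ^ ((q - 1) / d))).eval c) ↔
      (Nat.gcd r ((q - 1) / d) = 1 ∧
        Set.BijOn (fun ζ : F => ζ ^ r * h.eval ζ ^ ((q - 1) / d))
          {ζ : F | ζ ^ d = 1} {ζ : F | ζ ^ d = 1}) :=
  stmt_0_general hq hr hdvd h
end

section
/- Let q be a prime power, let d, r, n > 0 be integers with d dividing q−1, and let h ∈ F_q[x]. Suppose that h(ζ)^{(q−1)/d} = ζ^n for every ζ ∈ μ_d. Then f(x) := x^r · h(x^{(q−1)/d}) is a permutation polynomial of F_q if and only if gcd(r+n, d) = 1 and gcd(r, (q−1)/d) = 1. -/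
open Polynomial

lemma aux_eq_of_pow_eq {F : Type*} [Field F] {a b : F} (hb : b ≠ 0)
    {m k : ℕ} (hg : Nat.gcd m k = 1) (h1 : a ^ m = b ^ m) (h2 : a ^ k = b ^ k) : a = b := by
  have h1' : (a / b) ^ m = 1 := by rw [div_pow, h1, div_self (pow_ne_zero m hb)]
  have h2' : (a / b) ^ k = 1 := by rw [div_pow, h2, div_self (pow_ne_zero k hb)]
  have hdvd : orderOf (a / b) ∣ 1 := hg ▸ Nat.dvd_gcd (orderOf_dvd_of_pow_eq_one h1')
    (orderOf_dvd_of_pow_eq_one h2')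
  have h3 : a / b = 1 := orderOf_eq_one_iff.mp (Nat.eq_one_of_dvd_one hdvd)
  calc a = a / b * b := (div_mul_cancel₀ a hb).symm
    _ = b := by rw [h3, one_mul]

/-- Let q be a prime power, d, r, n > 0 with d ∣ q−1, h ∈ F_q[x]. Suppose
h(ζ)^{(q−1)/d} = ζ^n for every ζ ∈ μ_d. Then f(x) := x^r · h(x^{(q−1)/d}) permutes F_q
iff gcd(r+n, d) = 1 and gcd(r, (q−1)/d) = 1. -/
theorem stmt_1 {F : Type*} [Field F] [Fintype F] {q : ℕ} (hq : Fintype.card F = q)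
    {d r n : ℕ} (hd : 0 < d) (hr : 0 < r) (hn : 0 < n) (hdvd : d ∣ q - 1) (h : F[X])
    (hyp : ∀ ζ : F, ζ ^ d = 1 → h.eval ζ ^ ((q - 1) / d) = ζ ^ n) :
    Function.Bijective (fun c : F => (X ^ r * h.comp (X ^ ((q - 1) / d))).eval c) ↔
      (Nat.gcd (r + n) d = 1 ∧ Nat.gcd r ((q - 1) / d) = 1) := by
  classical
  have hq2 : 1 < q := hq ▸ Fintype.one_lt_card
  set s := (q - 1) / d with hs
  have hds : d * s = q - 1 := Nat.mul_div_cancel' hdvd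
  have hq1 : 0 < q - 1 := by omega
  have hspos : 0 < s := Nat.div_pos (Nat.le_of_dvd hq1 hdvd) hd
  simp only [eval_mul, eval_pow, eval_X, eval_comp]
  have hcd : ∀ c : F, c ≠ 0 → (c ^ s) ^ d = 1 := by
    intro c hc
    rw [← pow_mul, mul_comm s d, hds, ← hq]
    exact FiniteField.pow_card_sub_one_eq_one c hc
  have hne : ∀ c : F, c ≠ 0 → h.eval (c ^ s) ≠ 0 := by
    intro c hc hcon
    have h0 := hyp (c ^ s) (hcd c hc)
    rw [hcon, zero_pow hspos.ne'] at h0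
    exact (pow_ne_zero n (pow_ne_zero s hc)) h0.symm
  have hfs : ∀ c : F, c ≠ 0 → (c ^ r * h.eval (c ^ s)) ^ s = (c ^ s) ^ (r + n) := by
    intro c hc
    rw [mul_pow, hyp (c ^ s) (hcd c hc), ← pow_mul, ← pow_mul, ← pow_mul, ← pow_add]
    congr 1
    ring
  constructor
  · intro hbij
    constructor
    · by_contra hg
      obtain ⟨p, hp, hpdvd⟩ := Nat.exists_prime_and_dvd hg
      have hprn : p ∣ r + n := hpdvd.trans (Nat.gcd_dvd_left _ _)
      have hpd : p ∣ d := hpdvd.trans (Nat.gcd_dvd_right _ _)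
      obtain ⟨g, hgen⟩ := IsCyclic.exists_generator (α := Fˣ)
      have hord : orderOf g = q - 1 := by
        rw [orderOf_eq_card_of_forall_mem_zpowers hgen, Nat.card_eq_fintype_card,
          Fintype.card_units, hq]
      obtain ⟨c, hc⟩ := hbij.2 (↑g : F)
      simp only at hc
      have hc0 : c ≠ 0 := by
        rintro rfl
        rw [zero_pow hr.ne', zero_mul] at hc
        exact g.ne_zero hc.symm
      obtain ⟨e, he⟩ := hpd
      obtain ⟨m, hm⟩ := hprn
      have hepos : 0 < e := Nat.pos_of_ne_zero (fun hh => by subst hh; simp at he; omega)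
      have key : (↑g : F) ^ (s * e) = 1 := by
        rw [← hc, pow_mul, hfs c hc0, ← pow_mul, show (r + n) * e = d * m by
          rw [hm, he]; ring]
        rw [pow_mul, hcd c hc0, one_pow]
      have kg : g ^ (s * e) = 1 := Units.ext (by
        rw [Units.val_pow_eq_pow_val, Units.val_one]; exact key)
      have hdv : q - 1 ∣ s * e := hord ▸ orderOf_dvd_of_pow_eq_one kg
      have hle : q - 1 ≤ s * e := Nat.le_of_dvd (Nat.mul_pos hspos hepos) hdv
      have heq : p * (s * e) = q - 1 := by rw [← hds, he]; ring
      nlinarith [hp.two_le, Nat.mul_pos hspos hepos]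
    · by_contra hg
      obtain ⟨p, hp, hpdvd⟩ := Nat.exists_prime_and_dvd hg
      have hpr : p ∣ r := hpdvd.trans (Nat.gcd_dvd_left _ _)
      have hps : p ∣ s := hpdvd.trans (Nat.gcd_dvd_right _ _)
      haveI := Fact.mk hp
      obtain ⟨u, hu⟩ := exists_prime_orderOf_dvd_card (G := Fˣ) p
        (by rw [Fintype.card_units, hq]; exact hps.trans ⟨d, by rw [← hds, mul_comm]⟩)
      have hu1 : u ≠ 1 := by
        intro hh
        rw [hh, orderOf_one] at hu
        exact hp.one_lt.ne' hu.symm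
      have hur : (↑u : F) ^ r = 1 := by
        have h0 : u ^ r = 1 := orderOf_dvd_iff_pow_eq_one.mp (hu ▸ hpr)
        rw [← Units.val_pow_eq_pow_val, h0, Units.val_one]
      have hus : (↑u : F) ^ s = 1 := by
        have h0 : u ^ s = 1 := orderOf_dvd_iff_pow_eq_one.mp (hu ▸ hps)
        rw [← Units.val_pow_eq_pow_val, h0, Units.val_one]
      have : (↑u : F) = 1 := by
        have := hbij.1 (a₁ := (↑u : F)) (a₂ := 1) (by simp [hur, hus])
        exact this
      exact hu1 (Units.ext this)
  · rintro ⟨hgd, hgs⟩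
    apply Finite.injective_iff_bijective.mp
    intro a b hab
    simp only at hab
    rcases eq_or_ne a 0 with rfl | ha
    · rcases eq_or_ne b 0 with rfl | hb
      · rfl
      · exfalso
        rw [zero_pow hr.ne', zero_mul] at hab
        exact (mul_ne_zero (pow_ne_zero r hb) (hne b hb)) hab.symm
    rcases eq_or_ne b 0 with rfl | hb
    · exfalso
      rw [zero_pow hr.ne', zero_mul] at hab
      exact (mul_ne_zero (pow_ne_zero r ha) (hne a ha)) hab
    have h1 : (a ^ s) ^ (r + n) = (b ^ s) ^ (r + n) := by
      rw [← hfs a ha, ← hfs b hb, hab]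
    have h2 : a ^ s = b ^ s :=
      aux_eq_of_pow_eq (pow_ne_zero s hb) hgd h1 (by rw [hcd a ha, hcd b hb])
    have h3 : a ^ r = b ^ r := by
      rw [h2] at hab
      exact mul_right_cancel₀ (hne b hb) hab
    exact aux_eq_of_pow_eq hb hgs h3 h2
end

section
/- Let t, d, e, r, k be positive integers with d dividing q−1 and gcd(d, e) = 1, and put s := (q−1)/d. Suppose q = q_0^m where m is even, q_0 is a prime power, and q_0 ≡ −1 (mod d). Then f(x) := x^r · h_k(x^{e(q−1)/d})^t is a permutation polynomial of F_q if and only if gcd(r, s) = 1, gcd(k, pd) = 1, and gcd(2r + (k−1)tes, 2d) = 2, where p is the characteristic of F_q. -/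
/-!
Write `f(x) = x^r g(x^s)` with `g(y) = h_k(y^e)^t`. Since `d ∣ q₀ + 1`, the Frobenius
`y ↦ y^{q₀}` inverts the `d`-th roots of unity, and the palindromic symmetry of `h_k` then gives
`h_k(y)^{q₀ - 1} = y^{1 - k}` on `μ_d` whenever `h_k(y) ≠ 0`. As `q₀ - 1` divides `s`,
`f(x)^s = (x^s)^B` with `B = r - (k - 1)et · s/(q₀ - 1)`. On the cyclic group `F_q^*` this makes
`f` bijective iff `gcd(r, s) = 1` and `gcd(B, d) = 1`, provided `h_k` has no zero on `μ_d`,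
which happens exactly when `gcd(k, pd) = 1`. Finally `2B ≡ 2r + (k - 1)tes (mod 2d)`, which
turns `gcd(B, d) = 1` into the stated condition.
-/

open Polynomial Function Finset

theorem Nat.exists_pow_sub_one_eq_of_even (q₀ : ℕ) {m : ℕ} (hm : Even m) :
    ∃ N, q₀ ^ m - 1 = (q₀ - 1) * (q₀ + 1) * N := by
  obtain ⟨u, rfl⟩ := hm
  obtain ⟨N, hN⟩ := Nat.sub_dvd_pow_sub_pow (q₀ ^ 2) 1 u
  refine ⟨N, ?_⟩
  rw [one_pow] at hN
  have hsq : q₀ ^ 2 - 1 = (q₀ - 1) * (q₀ + 1) := by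
    simpa [mul_comm] using Nat.sq_sub_sq q₀ 1
  rw [← two_mul, pow_mul, hN, hsq]

theorem two_dvd_sub_one_mul_of_coprime {k p d a c : ℕ} (hk : k.Coprime (p * d))
    (hc : p ^ a + 1 = d * c) : 2 ∣ (k - 1) * c := by
  rcases Nat.even_or_odd k with hke | ⟨j, rfl⟩
  · have h2 : ¬ 2 ∣ p * d := fun h => by
      simpa [hk] using Nat.dvd_gcd hke.two_dvd h
    have hdc : 2 ∣ d * c := by
      rw [← hc, ← even_iff_two_dvd, Nat.even_add_one, Nat.even_pow, even_iff_two_dvd]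
      exact fun h => h2 (dvd_mul_of_dvd_left h.1 d)
    exact dvd_mul_of_dvd_right (((Nat.Prime.dvd_mul Nat.prime_two).mp hdc).resolve_left
      fun h => h2 (dvd_mul_of_dvd_right h p)) _
  · exact dvd_mul_of_dvd_left ⟨j, by omega⟩ c

theorem Int.gcd_eq_two_iff_gcd_eq_one {A B d w : ℤ} (h : A = 2 * B + 2 * d * w) :
    A.gcd (2 * d) = 2 ↔ B.gcd d = 1 := by
  rw [h, show 2 * B + 2 * d * w = 2 * (B + d * w) by ring, Int.gcd_mul_left,
    Int.gcd_add_mul_left_left]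
  simp

theorem Nat.gcd_two_mul_add_eq_two_iff {k p d a c N r t e : ℕ} (hp : 0 < p)
    (hk : k.Coprime (p * d)) (hc : p ^ a + 1 = d * c) :
    Nat.gcd (2 * r + (k - 1) * t * e * ((p ^ a - 1) * (c * N))) (2 * d) = 2
      ↔ ((r : ℤ) - (k - 1 : ℕ) * e * t * (c * N)).gcd d = 1 := by
  obtain ⟨v, hv⟩ := two_dvd_sub_one_mul_of_coprime hk hc
  rw [← Int.gcd_natCast_natCast, Nat.cast_mul 2 d, Nat.cast_two]
  refine Int.gcd_eq_two_iff_gcd_eq_one (w := v * t * e * N * c) ?_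
  have hv' : ((k - 1 : ℕ) : ℤ) * c = 2 * v := by exact_mod_cast hv
  have hc' : (p : ℤ) ^ a + 1 = d * c := by exact_mod_cast hc
  push_cast [Nat.one_le_pow _ _ hp]
  linear_combination (t * e * N * c * d : ℤ) * hv' + ((k - 1 : ℕ) * t * e * c * N : ℤ) * hc'

section GeomSum

variable {K : Type*} [Field K] {k : ℕ}

theorem geom_sum_ne_zero_of_pow_eq_one {p d : ℕ} [CharP K p] (hk : k.Coprime (p * d)) {y : K}
    (hy : y ^ d = 1) : ∑ i ∈ range k, y ^ i ≠ 0 := by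
  intro hsum
  have hyk : y ^ k = 1 := by
    have h := geom_sum_mul y k
    rwa [hsum, zero_mul, eq_comm, sub_eq_zero] at h
  have hy1 : y = 1 := by
    have h := pow_gcd_eq_one.mpr ⟨hyk, hy⟩
    rwa [Nat.Coprime.coprime_dvd_right (dvd_mul_left d p) hk, pow_one] at h
  have hpk : p ∣ k := by
    rw [← CharP.cast_eq_zero_iff K p]
    simpa [hy1] using hsum
  have hp1 : p ∣ 1 := hk ▸ Nat.dvd_gcd hpk (dvd_mul_right p d)
  exact one_ne_zero (α := K) (by exact_mod_cast (CharP.cast_eq_zero_iff K p 1).mpr hp1)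

theorem geom_sum_inv_mul_pow {y : K} (hy : y ≠ 0) :
    (∑ i ∈ range k, y⁻¹ ^ i) * y ^ (k - 1) = ∑ i ∈ range k, y ^ i := by
  rw [sum_mul, ← sum_range_reflect]
  refine sum_congr rfl fun i hi => ?_
  rw [mem_range] at hi
  rw [inv_pow, ← div_eq_inv_mul, div_eq_iff (pow_ne_zero _ hy), ← pow_add]
  congr 1
  omega

theorem geom_sum_pow_sub_one_mul_pow_eq_one {p a : ℕ} [ExpChar K p] {y : K} (hy0 : y ≠ 0)
    (hy : y ^ p ^ a = y⁻¹) (hsum : ∑ i ∈ range k, y ^ i ≠ 0) :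
    (∑ i ∈ range k, y ^ i) ^ (p ^ a - 1) * y ^ (k - 1) = 1 := by
  have hfrob : (∑ i ∈ range k, y ^ i) ^ p ^ a = ∑ i ∈ range k, y⁻¹ ^ i := by
    rw [sum_pow_char_pow]
    exact sum_congr rfl fun i _ => by rw [← pow_mul, mul_comm, pow_mul, hy]
  apply mul_left_cancel₀ hsum
  rw [← mul_assoc, ← pow_succ', Nat.sub_add_cancel (Nat.one_le_pow _ _ (expChar_pos K p)),
    hfrob, geom_sum_inv_mul_pow hy0, mul_one]

end GeomSum

section CyclicGroup

variable {G : Type*} [CommGroup G]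

theorem eq_one_of_zpow_eq_one_of_pow_eq_one {x : G} {B : ℤ} {d : ℕ} (hB : x ^ B = 1)
    (hd : x ^ d = 1) (hBd : B.gcd d = 1) : x = 1 := by
  rw [← pow_natAbs_eq_one] at hB
  have h := pow_gcd_eq_one.mpr ⟨hB, hd⟩
  rwa [← Int.natAbs_natCast d, ← Int.gcd_eq_natAbs_gcd_natAbs, hBd, pow_one] at h

theorem Int.gcd_eq_one_of_pow_eq_zpow [Finite G] {s d : ℕ} {B : ℤ} (hcard : Nat.card G = s * d)
    {γ x : G} (hγ : orderOf γ = Nat.card G) (hx : x ^ d = 1) (h : γ ^ s = x ^ B) :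
    B.gcd d = 1 := by
  have hs : s ≠ 0 := left_ne_zero_of_mul (hcard ▸ Nat.card_pos.ne')
  have hord : orderOf (γ ^ s) = d := by
    rw [orderOf_pow_of_dvd hs (by rw [hγ, hcard]; exact dvd_mul_right s d), hγ, hcard,
      Nat.mul_div_cancel_left d hs.bot_lt]
  obtain ⟨d', hd'⟩ := Int.gcd_dvd_right B d
  obtain ⟨B', hB'⟩ := Int.gcd_dvd_left B d
  have hd'0 : d' ≠ 0 := by
    rintro rfl
    rw [mul_zero, Nat.cast_eq_zero] at hd'
    simp [hd', Nat.card_pos.ne'] at hcard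
  have hpow : (γ ^ s) ^ d' = 1 := by
    rw [h, ← zpow_mul, hB', show (B.gcd d : ℤ) * B' * d' = (B.gcd d * d') * B' by ring,
      ← hd', zpow_mul, zpow_natCast, hx, one_zpow]
  have hdvd := orderOf_dvd_iff_zpow_eq_one.mpr hpow
  rw [hord, hd'] at hdvd
  have h1 : (B.gcd d : ℤ) ∣ 1 := (mul_dvd_mul_iff_right hd'0).mp (by rwa [one_mul])
  exact_mod_cast Int.eq_one_of_dvd_one (Int.natCast_nonneg _) h1

variable [IsCyclic G] [Finite G]

theorem IsCyclic.exists_pow_mul_eq_of_pow_eq_one {s d e : ℕ} (hcard : Nat.card G = s * d)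
    (hde : d.Coprime e) {y : G} (hy : y ^ d = 1) : ∃ c : G, c ^ (e * s) = y := by
  have hs : s ≠ 0 := left_ne_zero_of_mul (hcard ▸ Nat.card_pos.ne')
  have hle : (powMonoidHom (e * s) : G →* G).range ≤ (powMonoidHom d).ker := by
    rintro _ ⟨c, rfl⟩
    simp only [MonoidHom.mem_ker, powMonoidHom_apply, ← pow_mul]
    rw [show e * s * d = s * d * e by ring, ← hcard, pow_mul, pow_card_eq_one', one_pow]
  have hcard_ge : Nat.card (powMonoidHom d : G →* G).ker
      ≤ Nat.card (powMonoidHom (e * s) : G →* G).range := by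
    rw [IsCyclic.card_powMonoidHom_ker, IsCyclic.card_powMonoidHom_range, hcard, mul_comm e,
      Nat.gcd_mul_left, hde, mul_one, Nat.gcd_mul_left_left, Nat.mul_div_cancel_left _ hs.bot_lt]
  have hy' : y ∈ (powMonoidHom d : G →* G).ker := hy
  rwa [← Subgroup.eq_of_le_of_card_ge hle hcard_ge] at hy'

theorem IsCyclic.bijective_iff_of_pow_eq_zpow {s d r : ℕ} {B : ℤ} (hcard : Nat.card G = s * d)
    {φ : G → G} (hφ : ∀ a b, a ^ s = b ^ s → φ a / a ^ r = φ b / b ^ r)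
    (hB : ∀ c, φ c ^ s = (c ^ s) ^ B) :
    Bijective φ ↔ r.gcd s = 1 ∧ B.gcd d = 1 := by
  have hsd : ∀ c : G, (c ^ s) ^ d = 1 := fun c => by rw [← pow_mul, ← hcard, pow_card_eq_one']
  constructor
  · intro hbij
    constructor
    · have hker : (powMonoidHom (r.gcd s) : G →* G).ker = ⊥ := by
        refine (Subgroup.eq_bot_iff_forall _).mpr fun x hx => hbij.injective ?_
        obtain ⟨hxr, hxs⟩ := pow_gcd_eq_one.mp hx
        simpa [hxr] using hφ x 1 (by rw [hxs, one_pow])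
      have := IsCyclic.card_powMonoidHom_ker G (r.gcd s)
      rwa [hker, Subgroup.card_bot, hcard,
        Nat.gcd_eq_right ((Nat.gcd_dvd_right r s).mul_right d), eq_comm] at this
    · obtain ⟨γ, hγ⟩ := IsCyclic.exists_ofOrder_eq_natCard (α := G)
      obtain ⟨c, rfl⟩ := hbij.surjective γ
      exact Int.gcd_eq_one_of_pow_eq_zpow hcard hγ (hsd c) (hB c)
  · rintro ⟨hrs, hBd⟩
    refine Finite.injective_iff_bijective.mp fun a b hab => ?_
    have has : a ^ s = b ^ s := by
      rw [← div_eq_one]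
      refine eq_one_of_zpow_eq_one_of_pow_eq_one ?_ ?_ hBd
      · rw [div_zpow, ← hB, ← hB, hab, div_self']
      · rw [div_pow, hsd, hsd, div_one]
    have har : a ^ r = b ^ r := by simpa [hab] using hφ a b has
    rw [← div_eq_one]
    have h := pow_gcd_eq_one.mpr ⟨(div_pow a b r).trans (div_eq_one.mpr har),
      (div_pow a b s).trans (div_eq_one.mpr has)⟩
    rwa [hrs, pow_one] at h

end CyclicGroup

theorem bijective_iff_bijective_units_mk0 {M₀ : Type*} [GroupWithZero M₀] {f : M₀ → M₀}
    (h0 : f 0 = 0) (hf : ∀ c : M₀ˣ, f c ≠ 0) :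
    Bijective f ↔ Bijective (fun c : M₀ˣ => Units.mk0 (f c) (hf c)) := by
  have hf' : ∀ c, c ≠ 0 → f c ≠ 0 := fun c hc => hf (Units.mk0 c hc)
  constructor
  · rintro ⟨hinj, hsurj⟩
    refine ⟨fun a b hab => Units.ext (hinj (congrArg Units.val hab)), fun y => ?_⟩
    obtain ⟨x, hx⟩ := hsurj y
    have hx0 : x ≠ 0 := by rintro rfl; exact y.ne_zero (hx ▸ h0)
    exact ⟨Units.mk0 x hx0, Units.ext hx⟩
  · rintro ⟨hinj, hsurj⟩
    refine ⟨fun a b hab => ?_, fun y => ?_⟩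
    · rcases eq_or_ne a 0 with rfl | ha
      · by_contra hb; exact hf' b (Ne.symm hb) (hab ▸ h0)
      rcases eq_or_ne b 0 with rfl | hb
      · exact absurd (hab.trans h0) (hf' a ha)
      exact congrArg Units.val (@hinj (Units.mk0 a ha) (Units.mk0 b hb) (Units.ext hab))
    · rcases eq_or_ne y 0 with rfl | hy
      · exact ⟨0, h0⟩
      obtain ⟨x, hx⟩ := hsurj (Units.mk0 y hy)
      exact ⟨x, congrArg Units.val hx⟩

section FiniteField

variable {F : Type*} [Field F] [Fintype F] {k s d e : ℕ}

theorem FiniteField.exists_eq_pow_of_isPrimePow {p : ℕ} [CharP F p] {q₀ m : ℕ}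
    (hq₀ : IsPrimePow q₀) (hm : q₀ ^ m = Fintype.card F) :
    ∃ a, q₀ = p ^ a := by
  obtain ⟨l, a, hl, ha, rfl⟩ := hq₀
  obtain ⟨n, hp, hn⟩ := FiniteField.card F p
  have hm0 : m ≠ 0 := by
    rintro rfl
    exact (Fintype.one_lt_card (α := F)).ne (by rw [← hm, pow_zero])
  have hlp : l ∣ p ^ (n : ℕ) := by
    rw [← hn, ← hm]
    exact (dvd_pow_self l ha.ne').trans (dvd_pow_self _ hm0)
  rw [← Nat.prime_iff] at hl
  exact ⟨a, by rw [(Nat.prime_dvd_prime_iff_eq hl hp).mp (hl.dvd_of_dvd_pow hlp)]⟩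

theorem FiniteField.bijective_pow_mul_comp_pow_iff {r : ℕ} {B : ℤ} (hr : r ≠ 0)
    (hsd : s * d = Fintype.card F - 1) {g : F → F} (hg : ∀ c : F, c ≠ 0 → g (c ^ s) ≠ 0)
    (hB : ∀ c : F, c ≠ 0 → (c ^ r * g (c ^ s)) ^ s = (c ^ s) ^ B) :
    Bijective (fun c => c ^ r * g (c ^ s)) ↔ r.gcd s = 1 ∧ B.gcd d = 1 := by
  have hf : ∀ c : Fˣ, (c : F) ^ r * g ((c : F) ^ s) ≠ 0 :=
    fun c => mul_ne_zero (pow_ne_zero r c.ne_zero) (hg c c.ne_zero)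
  rw [bijective_iff_bijective_units_mk0 (by simp [hr]) hf]
  refine IsCyclic.bijective_iff_of_pow_eq_zpow
    (by rw [Nat.card_units, Nat.card_eq_fintype_card, hsd]) (fun a b hab => ?_) fun c => ?_
  · have hab' : (a : F) ^ s = (b : F) ^ s := by simpa using congrArg Units.val hab
    ext
    simp [Units.val_div_eq_div_val, hab']
  · ext
    simpa [Units.val_zpow_eq_zpow_val] using hB c c.ne_zero

theorem FiniteField.exists_pow_eq_one_geom_sum_eq_zero {p : ℕ} [CharP F p]
    (hd : d ∣ Fintype.card F - 1) (hk : ¬ k.Coprime (p * d)) :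
    ∃ y : F, y ^ d = 1 ∧ ∑ i ∈ range k, y ^ i = 0 := by
  obtain ⟨l, hl, hlk, hlpd⟩ := Nat.Prime.not_coprime_iff_dvd.mp hk
  rcases (Nat.Prime.dvd_mul hl).mp hlpd with hlp | hld
  · refine ⟨1, one_pow d, ?_⟩
    rw [(Nat.prime_dvd_prime_iff_eq hl (CharP.char_is_prime F p)).mp hlp] at hlk
    simpa using (CharP.cast_eq_zero_iff F p k).mpr hlk
  · classical
    have := Fact.mk hl
    obtain ⟨y, hy⟩ := exists_prime_orderOf_dvd_card (G := Fˣ) l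
      (by rw [Fintype.card_units]; exact hld.trans hd)
    have hpow : ∀ n, l ∣ n → (y : F) ^ n = 1 := fun n hn => by
      rw [← Units.val_pow_eq_pow_val, orderOf_dvd_iff_pow_eq_one.mp (hy ▸ hn), Units.val_one]
    have hy1 : (y : F) ≠ 1 := fun h => by
      rw [Units.val_eq_one.mp h, orderOf_one] at hy
      exact hl.one_lt.ne hy
    refine ⟨y, hpow d hld, ?_⟩
    have h := geom_sum_mul (y : F) k
    rw [hpow k hlk, sub_self] at h
    exact (mul_eq_zero.mp h).resolve_right (sub_ne_zero.mpr hy1)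

theorem FiniteField.forall_geom_sum_pow_ne_zero_iff {p t : ℕ} [CharP F p]
    (hsd : s * d = Fintype.card F - 1) (hde : d.Coprime e) (ht : t ≠ 0) :
    (∀ c : F, c ≠ 0 → (∑ i ∈ range k, ((c ^ s) ^ e) ^ i) ^ t ≠ 0) ↔ k.Coprime (p * d) := by
  have hμ : ∀ c : F, c ≠ 0 → ((c ^ s) ^ e) ^ d = 1 := fun c hc => by
    rw [pow_right_comm, ← pow_mul c s d, hsd, FiniteField.pow_card_sub_one_eq_one c hc,
      one_pow]
  refine ⟨fun h => ?_, fun hk c hc =>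
    pow_ne_zero t (geom_sum_ne_zero_of_pow_eq_one hk (hμ c hc))⟩
  by_contra hk
  obtain ⟨y, hy, hsum⟩ :=
    FiniteField.exists_pow_eq_one_geom_sum_eq_zero (Dvd.intro_left s hsd) hk
  have hy0 : y ≠ 0 := by
    rintro rfl
    obtain rfl : d = 0 := zero_pow_eq_one₀.mp hy
    have := Fintype.one_lt_card (α := F)
    rw [mul_zero] at hsd
    omega
  obtain ⟨c, hc⟩ := IsCyclic.exists_pow_mul_eq_of_pow_eq_one (G := Fˣ)
    (by rw [Nat.card_units, Nat.card_eq_fintype_card, hsd]) hde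
    (y := Units.mk0 y hy0) (Units.ext (by simpa using hy))
  have hcy : ((c : F) ^ s) ^ e = y := by
    simpa [← pow_mul, mul_comm s e] using congrArg Units.val hc
  exact h c c.ne_zero (by rw [hcy, hsum, zero_pow ht])

theorem FiniteField.pow_mul_geom_sum_pow_pow_eq_zpow {p a : ℕ} [ExpChar F p] {r t M : ℕ}
    (hsd : s * d = Fintype.card F - 1) (hd : d ∣ p ^ a + 1) (hs : s = (p ^ a - 1) * M) {c : F}
    (hc : c ≠ 0) (hsum : ∑ i ∈ range k, ((c ^ s) ^ e) ^ i ≠ 0) :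
    (c ^ r * (∑ i ∈ range k, ((c ^ s) ^ e) ^ i) ^ t) ^ s
      = (c ^ s) ^ ((r : ℤ) - (k - 1 : ℕ) * e * t * M) := by
  set x := c ^ s
  set y := x ^ e
  have hx0 : x ≠ 0 := pow_ne_zero s hc
  have hy0 : y ≠ 0 := pow_ne_zero e hx0
  have hyd : y ^ d = 1 := by
    rw [pow_right_comm, ← pow_mul c s d, hsd, FiniteField.pow_card_sub_one_eq_one c hc, one_pow]
  have hyinv : y ^ p ^ a = y⁻¹ := by
    obtain ⟨c₀, hc₀⟩ := hd
    refine eq_inv_of_mul_eq_one_left ?_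
    rw [← pow_succ, hc₀, pow_mul, hyd, one_pow]
  have hHs : (∑ i ∈ range k, y ^ i) ^ s = ((y ^ (k - 1)) ^ M)⁻¹ := by
    rw [hs, pow_mul, eq_inv_of_mul_eq_one_left
      (geom_sum_pow_sub_one_mul_pow_eq_one hy0 hyinv hsum), inv_pow]
  calc (c ^ r * (∑ i ∈ range k, y ^ i) ^ t) ^ s
      = x ^ r * ((∑ i ∈ range k, y ^ i) ^ s) ^ t := by
        rw [mul_pow, pow_right_comm, pow_right_comm _ t]
    _ = x ^ r / x ^ ((k - 1) * e * t * M) := by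
      rw [hHs, inv_pow, div_eq_mul_inv]
      simp only [y, ← pow_mul]
      ring_nf
    _ = x ^ ((r : ℤ) - (k - 1 : ℕ) * e * t * M) := by
      rw [zpow_sub₀ hx0]
      norm_cast

theorem FiniteField.bijective_pow_mul_geom_sum_pow_iff {p a : ℕ} [CharP F p] {r t M : ℕ}
    (hr : r ≠ 0) (ht : t ≠ 0) (hsd : s * d = Fintype.card F - 1) (hd : d ∣ p ^ a + 1)
    (hs : s = (p ^ a - 1) * M) (hde : d.Coprime e) (hk : k.Coprime (p * d)) :
    Bijective (fun c : F => c ^ r * (∑ i ∈ range k, ((c ^ s) ^ e) ^ i) ^ t)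
      ↔ r.gcd s = 1 ∧ ((r : ℤ) - (k - 1 : ℕ) * e * t * M).gcd d = 1 := by
  have := Fact.mk (CharP.char_is_prime F p)
  have hg := (FiniteField.forall_geom_sum_pow_ne_zero_iff hsd hde ht).mpr hk
  exact FiniteField.bijective_pow_mul_comp_pow_iff
    (g := fun y => (∑ i ∈ range k, (y ^ e) ^ i) ^ t) hr hsd hg fun c hc =>
      FiniteField.pow_mul_geom_sum_pow_pow_eq_zpow hsd hd hs hc ((pow_ne_zero_iff ht).mp (hg c hc))

end FiniteField

theorem stmt_5_general {F : Type*} [Field F] [Fintype F] {q q0 m p : ℕ}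
    (hq : Fintype.card F = q) (hp : p.Prime) [CharP F p]
    {t d e r k : ℕ} (ht : 0 < t) (hd : 0 < d) (hr : 0 < r)
    (hed : Nat.gcd d e = 1) (s : ℕ) (hs : s = (q - 1) / d)
    (hq0 : IsPrimePow q0) (hqm : q = q0 ^ m) (hme : Even m) (hcong : d ∣ q0 + 1) :
    Function.Bijective (fun c : F =>
      (X ^ r * ((∑ i ∈ Finset.range k, X ^ i : F[X]).comp
        (X ^ (e * ((q - 1) / d)))) ^ t).eval c) ↔
      (Nat.gcd r s = 1 ∧ Nat.gcd k (p * d) = 1 ∧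
        Nat.gcd (2 * r + (k - 1) * t * e * s) (2 * d) = 2) := by
  obtain ⟨a, rfl⟩ :=
    FiniteField.exists_eq_pow_of_isPrimePow (F := F) (p := p) hq0 (hqm ▸ hq).symm
  obtain ⟨N, hN⟩ := Nat.exists_pow_sub_one_eq_of_even (p ^ a) hme
  obtain ⟨c₀, hc₀⟩ := hcong
  have hsM : s = (p ^ a - 1) * (c₀ * N) := by
    rw [hs, hqm, hN, hc₀,
      show (p ^ a - 1) * (d * c₀) * N = d * ((p ^ a - 1) * (c₀ * N)) by ring,
      Nat.mul_div_cancel_left _ hd]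
  have hsd : s * d = Fintype.card F - 1 := by rw [hq, hqm, hN, hc₀, hsM]; ring
  rw [← hs]
  simp only [eval_mul, eval_pow, eval_X, eval_comp, eval_finsetSum, pow_mul']
  have hcrit (hk : k.Coprime (p * d)) := FiniteField.bijective_pow_mul_geom_sum_pow_iff
    hr.ne' ht.ne' hsd ⟨c₀, hc₀⟩ hsM hed hk
  have harith (hk : k.Coprime (p * d)) :=
    hsM ▸ Nat.gcd_two_mul_add_eq_two_iff (r := r) (t := t) (e := e) (N := N) hp.pos hk hc₀
  constructor
  · intro hbij
    have hk : k.Coprime (p * d) :=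
      (FiniteField.forall_geom_sum_pow_ne_zero_iff hsd hed ht.ne').mp fun c hc h0 =>
        hc (hbij.injective (by simp [h0, hr.ne']))
    exact ⟨((hcrit hk).mp hbij).1, hk, (harith hk).mpr ((hcrit hk).mp hbij).2⟩
  · rintro ⟨hrs, hk, hgcd⟩
    exact (hcrit hk).mpr ⟨hrs, (harith hk).mp hgcd⟩

/-- Let t, d, e, r, k > 0 with d ∣ q−1 and gcd(d, e) = 1, and put s := (q−1)/d.
Suppose q = q_0^m with m even, q_0 a prime power, q_0 ≡ −1 (mod d). Then
f(x) := x^r · h_k(x^{e(q−1)/d})^t permutes F_q iff gcd(r, s) = 1, gcd(k, pd) = 1,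
and gcd(2r + (k−1)tes, 2d) = 2, where p = char F_q. -/
theorem stmt_5 {F : Type*} [Field F] [Fintype F] {q q0 m p : ℕ}
    (hq : Fintype.card F = q) (hp : p.Prime) [CharP F p]
    {t d e r k : ℕ} (ht : 0 < t) (hd : 0 < d) (he : 0 < e) (hr : 0 < r) (hk : 0 < k)
    (hdvd : d ∣ q - 1) (hed : Nat.gcd d e = 1) (s : ℕ) (hs : s = (q - 1) / d)
    (hq0 : IsPrimePow q0) (hqm : q = q0 ^ m) (hme : Even m) (hcong : d ∣ q0 + 1) :
    Function.Bijective (fun c : F =>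
      (X ^ r * ((∑ i ∈ Finset.range k, X ^ i : F[X]).comp
        (X ^ (e * ((q - 1) / d)))) ^ t).eval c) ↔
      (Nat.gcd r s = 1 ∧ Nat.gcd k (p * d) = 1 ∧
        Nat.gcd (2 * r + (k - 1) * t * e * s) (2 * d) = 2) :=
  stmt_5_general hq hp ht hd hr hed s hs hq0 hqm hme hcong
end

section
/- Let d ≥ 1 be an odd integer and n ≥ 0 an integer. Then the real number a_n := Σ_{t=1}^{(d−1)/2} (2·cos(π(2t−1)/d))^n is an integer. -/
/-!
Put `ζ = exp(iπ/d)`, so that `2 cos(π(2k+1)/d) = ζ^(2k+1) + ζ^-(2k+1)`. Expanding the `n`-th power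
binomially turns the full sum over `k < d` into sums `∑ₖ w^(2k+1)` with `w^(2d) = 1`, each of which
is `d`, `-d` or `0`; so the full sum is an integer. For `d = 2e+1` the angles are symmetric under
`k ↦ 2e - k` and the middle term is `(2 cos π)^n = (-2)^n`, hence `2 aₙ` is an integer. Finally `aₙ`
is an algebraic integer, being a sum of powers of numbers `2 cos(rπ)` with `r` rational, and a
rational algebraic integer lies in `ℤ`.
-/

open Finset Real

section OddPowerSums

variable {K : Type*} [Field K]

theorem exists_int_sum_range_pow_two_mul_add_one {w : K} {d : ℕ} (hw : w ^ (2 * d) = 1) :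
    ∃ z : ℤ, ∑ k ∈ range d, w ^ (2 * k + 1) = z := by
  have hgeom : ∑ k ∈ range d, w ^ (2 * k + 1) = w * ∑ k ∈ range d, (w ^ 2) ^ k := by
    rw [mul_sum]
    exact sum_congr rfl fun k _ => by ring
  by_cases hw2 : w ^ 2 = 1
  · rcases sq_eq_one_iff.mp hw2 with rfl | rfl
    · exact ⟨d, by simp⟩
    · exact ⟨-d, by simp [hgeom]⟩
  · refine ⟨0, ?_⟩
    rw [hgeom, geom_sum_eq hw2, ← pow_mul, hw]
    simp

theorem exists_int_sum_range_pow_add_inv_pow {ζ : K} {d : ℕ} (hζ : ζ ^ (2 * d) = 1) (n : ℕ) :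
    ∃ z : ℤ, ∑ k ∈ range d, (ζ ^ (2 * k + 1) + (ζ ^ (2 * k + 1))⁻¹) ^ n = z := by
  have hw : ∀ j, (ζ ^ j * ζ⁻¹ ^ (n - j)) ^ (2 * d) = 1 := fun j => by
    have : (ζ ^ j * ζ⁻¹ ^ (n - j)) ^ (2 * d) = (ζ ^ (2 * d)) ^ j * (ζ ^ (2 * d))⁻¹ ^ (n - j) := by
      ring
    rw [this, hζ, inv_one, one_pow, one_pow, one_mul]
  choose z hz using fun j => exists_int_sum_range_pow_two_mul_add_one (hw j)
  refine ⟨∑ j ∈ range (n + 1), z j * n.choose j, ?_⟩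
  simp_rw [add_pow]
  rw [sum_comm]
  push_cast
  refine sum_congr rfl fun j _ => ?_
  rw [← hz j, sum_mul]
  exact sum_congr rfl fun k _ => by ring

end OddPowerSums

theorem exists_int_sum_range_two_cos_pow (d n : ℕ) :
    ∃ z : ℤ, ∑ k ∈ range d, (2 * cos (π * (2 * k + 1) / d)) ^ n = z := by
  set ζ := Complex.exp (π / d * Complex.I)
  have hζ : ζ ^ (2 * d) = 1 := by
    rcases eq_or_ne d 0 with rfl | hd
    · simp
    rw [← Complex.exp_nat_mul, ← Complex.exp_two_pi_mul_I]
    congr 1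
    push_cast
    field_simp
  have hcos : ∀ k : ℕ, ((2 * cos (π * (2 * k + 1) / d) : ℝ) : ℂ) =
      ζ ^ (2 * k + 1) + (ζ ^ (2 * k + 1))⁻¹ := fun k => by
    rw [← Complex.exp_nat_mul, ← Complex.exp_neg]
    push_cast
    rw [Complex.two_cos]
    ring_nf
  obtain ⟨z, hz⟩ := exists_int_sum_range_pow_add_inv_pow hζ n
  refine ⟨z, Complex.ofReal_injective ?_⟩
  rw [Complex.ofReal_intCast, ← hz, Complex.ofReal_sum]
  simp only [Complex.ofReal_pow, hcos]

theorem sum_range_two_mul_add_one_of_symm {M : Type*} [AddCommMonoid M] (f : ℕ → M) (e : ℕ)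
    (hf : ∀ k ≤ e, f (2 * e - k) = f k) :
    ∑ k ∈ range (2 * e + 1), f k = 2 • ∑ k ∈ range e, f k + f e := by
  have hupper : ∑ k ∈ range (e + 1), f (e + k) = ∑ k ∈ range (e + 1), f k := by
    rw [← sum_range_reflect]
    refine sum_congr rfl fun k hk => ?_
    have hke : k < e + 1 := mem_range.mp hk
    rw [← hf k (by omega)]
    congr 1
    omega
  rw [show 2 * e + 1 = e + (e + 1) by ring, sum_range_add, hupper, sum_range_succ, two_smul,
    add_assoc]

theorem sum_range_two_cos_pow_eq_two_mul_add (e n : ℕ) :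
    ∑ k ∈ range (2 * e + 1), (2 * cos (π * (2 * k + 1) / (2 * e + 1 : ℕ))) ^ n =
      2 * ∑ k ∈ range e, (2 * cos (π * (2 * k + 1) / (2 * e + 1 : ℕ))) ^ n + (-2) ^ n := by
  rw [sum_range_two_mul_add_one_of_symm _ e fun k hk => ?_, two_nsmul]
  · rw [show π * (2 * (e : ℝ) + 1) / ((2 * e + 1 : ℕ) : ℝ) = π by push_cast; field_simp, cos_pi]
    ring
  · rw [← cos_two_pi_sub]
    push_cast [Nat.cast_sub (show k ≤ 2 * e by omega)]
    congr 3
    field_simp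
    ring

theorem stmt_9_general {d : ℕ} (hodd : Odd d) (n : ℕ) :
    ∃ z : ℤ, (∑ t ∈ Finset.Icc 1 ((d - 1) / 2),
      (2 * Real.cos (Real.pi * (2 * (t : ℝ) - 1) / d)) ^ n) = (z : ℝ) := by
  obtain ⟨e, rfl⟩ := hodd
  refine (IsIntegral.exists_int_iff_exists_rat ?_).mp ?_
  · refine IsIntegral.sum _ fun t _ => IsIntegral.pow ?_ n
    rw [show π * (2 * (t : ℝ) - 1) / (2 * e + 1 : ℕ) = ((2 * t - 1) / (2 * e + 1) : ℚ) * π by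
      push_cast; ring]
    exact isIntegral_two_mul_cos_rat_mul_pi _
  · obtain ⟨z, hz⟩ := exists_int_sum_range_two_cos_pow (2 * e + 1) n
    rw [sum_range_two_cos_pow_eq_two_mul_add] at hz
    refine ⟨(z - (-2) ^ n) / 2, ?_⟩
    have hreindex : ∑ t ∈ Icc 1 e, (2 * cos (π * (2 * (t : ℝ) - 1) / (2 * e + 1 : ℕ))) ^ n =
        ∑ k ∈ range e, (2 * cos (π * (2 * k + 1) / (2 * e + 1 : ℕ))) ^ n := by
      rw [← Ico_add_one_right_eq_Icc, sum_Ico_eq_sum_range]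
      refine sum_congr (by simp) fun k _ => ?_
      push_cast
      ring_nf
    rw [show (2 * e + 1 - 1) / 2 = e by omega, hreindex]
    push_cast at hz ⊢
    linarith

/-- Let d ≥ 1 be odd and n ≥ 0. Then a_n := Σ_{t=1}^{(d−1)/2} (2·cos(π(2t−1)/d))^n
is an integer. -/
theorem stmt_9 {d : ℕ} (hd : 1 ≤ d) (hodd : Odd d) (n : ℕ) :
    ∃ z : ℤ, (∑ t ∈ Finset.Icc 1 ((d - 1) / 2),
      (2 * Real.cos (Real.pi * (2 * (t : ℝ) - 1) / d)) ^ n) = (z : ℝ) :=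
  stmt_9_general hodd n
end

section
/- Let q be a power of the prime p, and let s, d, r, e be positive integers with s·d = q−1, gcd(r, s) = gcd(e, d) = 1, and d odd. For each integer n ≥ 0 define a_n := Σ_{t=1}^{(d−1)/2} (2·cos(π(2t−1)/d))^n. Suppose 2^s ≡ 1 (mod p) and each a_n is an integer with a_n ≡ a_{n+s} (mod p) for all n ≥ 0. Then every η ∈ μ_{2d} (in a fixed algebraic closure of F_q) satisfies (η + 1/η)^s = 1. -/
open Polynomial Finset

/-!
With `ζ = exp (2πi/d)` and `d = 2m + 1`, the number `2 cos (π(2t-1)/d)` equals `-(ζ^j + ζ^(-j))`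
for `j = m + 1 - t`, so `aₙ` is the value at `ζ` of an integer polynomial `Pₙ`. Since `Φ_d` is the
minimal polynomial of `ζ` over `ℤ`, it divides `Pₙ - aₙ`, hence `Pₙ(ξ) = aₙ` also for a primitive
`d`-th root of unity `ξ` of `F` (one exists because `d ∣ q - 1`). So the power sums of the distinct
elements `wⱼ = -(ξ^j + ξ^(-j))`, `1 ≤ j ≤ m`, are periodic with period `s` in characteristic `p`,
and a Vandermonde argument gives `wⱼ^s = 1`. Together with `2^s = 1` and `(-1)^s = 1` (as `d` is odd
and `s * d = q - 1`) this covers `η + η⁻¹` for every `2d`-th root of unity `η = ±ξ^j`.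
-/

theorem FiniteField.exists_isPrimitiveRoot_of_dvd {F : Type*} [Field F] [Fintype F] {d : ℕ}
    (hd : d ∣ Fintype.card F - 1) : ∃ ξ : F, IsPrimitiveRoot ξ d := by
  classical
  obtain ⟨g, hg⟩ := IsCyclic.exists_ofOrder_eq_natCard (α := Fˣ)
  have hgen : IsPrimitiveRoot (g : F) (Fintype.card F - 1) := by
    rw [IsPrimitiveRoot.coe_units_iff, ← Fintype.card_units, ← Nat.card_eq_fintype_card, ← hg]
    exact IsPrimitiveRoot.orderOf g
  obtain ⟨c, hc⟩ := hd
  have hcard := Fintype.one_lt_card (α := F)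
  exact ⟨_, hgen.pow (by omega) (hc.trans (mul_comm d c))⟩

theorem FiniteField.neg_one_pow_eq_one_of_mul_eq {F : Type*} [Field F] [Fintype F] {s d : ℕ}
    (hsd : s * d = Fintype.card F - 1) (hd : Odd d) : (-1 : F) ^ s = 1 :=
  calc (-1 : F) ^ s = ((-1) ^ d) ^ s := by rw [hd.neg_one_pow]
    _ = (-1) ^ (Fintype.card F - 1) := by rw [← pow_mul, mul_comm, hsd]
    _ = 1 := FiniteField.pow_card_sub_one_eq_one _ (neg_ne_zero.mpr one_ne_zero)

theorem Finset.pow_eq_one_of_sum_pow_add_eq {K : Type*} [Field K] (S : Finset K) {s : ℕ}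
    (h : ∀ n, ∑ x ∈ S, x ^ (n + s) = ∑ x ∈ S, x ^ n) {x : K} (hx : x ∈ S) : x ^ s = 1 := by
  let f : Fin S.card → K := fun i ↦ S.equivFin.symm i
  have hf : Function.Injective f := Subtype.val_injective.comp S.equivFin.symm.injective
  have hsum (g : K → K) : ∑ x ∈ S, g x = ∑ i, g (f i) := by
    rw [← S.sum_coe_sort, ← S.equivFin.symm.sum_comp]
  have hzero : (fun i ↦ f i ^ s - 1) = 0 := by
    refine Matrix.eq_zero_of_forall_pow_sum_mul_pow_eq_zero hf fun n ↦ ?_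
    have hn := h n
    rw [hsum, hsum] at hn
    simp only [sub_mul, one_mul, ← pow_add, sum_sub_distrib, add_comm s, hn, sub_self]
  obtain ⟨i, rfl⟩ : ∃ i, f i = x := ⟨S.equivFin ⟨x, hx⟩, by simp [f]⟩
  exact sub_eq_zero.mp (congrFun hzero i)

theorem aeval_eq_intCast_of_isPrimitiveRoot {L K : Type*} [Field L] [CharZero L] [CommRing K]
    [IsDomain K] {d : ℕ} (hd : 0 < d) {ζ : L} (hζ : IsPrimitiveRoot ζ d) {ξ : K}
    (hξ : IsPrimitiveRoot ξ d) {P : ℤ[X]} {k : ℤ} (h : aeval ζ P = k) : aeval ξ P = k := by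
  obtain ⟨R, hR⟩ : cyclotomic d ℤ ∣ P - C k := by
    rw [cyclotomic_eq_minpoly hζ hd]
    exact minpoly.isIntegrallyClosed_dvd (hζ.isIntegral hd) (by simp [h])
  have hroot : aeval ξ (cyclotomic d ℤ) = 0 := by
    simpa [aeval_def, eval₂_eq_eval_map, map_cyclotomic] using hξ.isRoot_cyclotomic hd
  simpa [hroot, sub_eq_zero] using congrArg (aeval ξ) hR

noncomputable def cosPowerSumPoly (d n : ℕ) : ℤ[X] :=
  ∑ j ∈ Icc 1 ((d - 1) / 2), (-(X ^ j + X ^ (d - j))) ^ n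

@[simp]
theorem aeval_cosPowerSumPoly {R : Type*} [CommRing R] (x : R) (d n : ℕ) :
    aeval x (cosPowerSumPoly d n) = ∑ j ∈ Icc 1 ((d - 1) / 2), (-(x ^ j + x ^ (d - j))) ^ n := by
  simp [cosPowerSumPoly]

open Complex in
theorem Complex.exp_pow_add_exp_pow_sub {d j : ℕ} (hd : d ≠ 0) (hj : j ≤ d) :
    exp (2 * Real.pi * I / d) ^ j + exp (2 * Real.pi * I / d) ^ (d - j) =
      ((2 * Real.cos (2 * Real.pi * j / d) : ℝ) : ℂ) := by
  have hζ := isPrimitiveRoot_exp d hd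
  rw [pow_sub₀ _ (hζ.ne_zero hd) hj, hζ.pow_eq_one, one_mul, ← exp_nat_mul, ← exp_neg]
  push_cast
  rw [two_cos]
  congr 2 <;> ring

open Real in
theorem Real.two_cos_pi_mul_odd_div {m j : ℕ} (hj : j ≤ m + 1) :
    2 * cos (π * (2 * ((m + 1 - j : ℕ) : ℝ) - 1) / (2 * m + 1 : ℕ)) =
      -(2 * cos (2 * π * j / (2 * m + 1 : ℕ))) := by
  rw [Nat.cast_sub hj, ← mul_neg, ← cos_pi_sub]
  congr 2
  field_simp
  push_cast
  ring

open Complex in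
theorem aeval_exp_cosPowerSumPoly {d : ℕ} (hd : Odd d) (n : ℕ) :
    aeval (exp (2 * Real.pi * I / d)) (cosPowerSumPoly d n) =
      ((∑ t ∈ Icc 1 ((d - 1) / 2), (2 * Real.cos (Real.pi * (2 * t - 1) / d)) ^ n : ℝ) : ℂ) := by
  obtain ⟨m, rfl⟩ := hd
  rw [aeval_cosPowerSumPoly, show (2 * m + 1 - 1) / 2 = m by omega, ofReal_sum]
  refine sum_nbij' (fun j ↦ m + 1 - j) (fun t ↦ m + 1 - t) ?_ ?_ ?_ ?_ fun j hj ↦ ?_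
  iterate 4 exact fun i hi ↦ by simp only [mem_Icc] at *; omega
  rw [mem_Icc] at hj
  rw [exp_pow_add_exp_pow_sub (by omega) (by omega), Real.two_cos_pi_mul_odd_div (by omega)]
  norm_cast

theorem eq_or_mul_eq_one_of_add_inv_eq_add_inv {K : Type*} [Field K] {a b : K} (ha : a ≠ 0)
    (hb : b ≠ 0) (h : a + a⁻¹ = b + b⁻¹) : a = b ∨ a * b = 1 := by
  have hfactor : (a - b) * (a * b - 1) = 0 := by
    field_simp at h
    linear_combination h
  rcases mul_eq_zero.mp hfactor with h | h
  · exact .inl (sub_eq_zero.mp h)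
  · exact .inr (sub_eq_zero.mp h)

namespace IsPrimitiveRoot

variable {K : Type*} [Field K] {d s : ℕ} {ξ : K}

theorem pow_sub_eq_inv (hξ : IsPrimitiveRoot ξ d) {j : ℕ} (hj : j ≤ d) :
    ξ ^ (d - j) = (ξ ^ j)⁻¹ := by
  rcases eq_or_ne d 0 with rfl | hd
  · simp [Nat.le_zero.mp hj]
  rw [pow_sub₀ ξ (hξ.ne_zero hd) hj, hξ.pow_eq_one, one_mul]

theorem injOn_pow_add_pow_sub (hξ : IsPrimitiveRoot ξ d) :
    Set.InjOn (fun j ↦ ξ ^ j + ξ ^ (d - j)) (Icc 1 ((d - 1) / 2) : Finset ℕ) := by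
  intro i hi j hj hij
  simp only [coe_Icc, Set.mem_Icc] at hi hj
  have hξ0 : ξ ≠ 0 := hξ.ne_zero (by omega)
  simp only [hξ.pow_sub_eq_inv (by omega : i ≤ d), hξ.pow_sub_eq_inv (by omega : j ≤ d)] at hij
  rcases eq_or_mul_eq_one_of_add_inv_eq_add_inv (pow_ne_zero i hξ0) (pow_ne_zero j hξ0) hij
    with h | h
  · exact hξ.pow_inj (by omega) (by omega) h
  · rw [← pow_add] at h
    exact absurd h (hξ.pow_ne_one_of_pos_of_lt (by omega) (by omega))

theorem neg_pow_add_pow_sub_pow_eq_one (hξ : IsPrimitiveRoot ξ d)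
    (h : ∀ n, ∑ j ∈ Icc 1 ((d - 1) / 2), (-(ξ ^ j + ξ ^ (d - j))) ^ (n + s) =
      ∑ j ∈ Icc 1 ((d - 1) / 2), (-(ξ ^ j + ξ ^ (d - j))) ^ n)
    {j : ℕ} (hj : j ∈ Icc 1 ((d - 1) / 2)) : (-(ξ ^ j + ξ ^ (d - j))) ^ s = 1 := by
  classical
  let w : ℕ → K := fun j ↦ -(ξ ^ j + ξ ^ (d - j))
  have hinj : Set.InjOn w (Icc 1 ((d - 1) / 2) : Finset ℕ) :=
    neg_injective.comp_injOn hξ.injOn_pow_add_pow_sub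
  refine ((Icc 1 ((d - 1) / 2)).image w).pow_eq_one_of_sum_pow_add_eq (fun n ↦ ?_)
    (mem_image_of_mem w hj)
  rw [sum_image hinj, sum_image hinj]
  exact h n

theorem add_inv_pow_eq_one (hξ : IsPrimitiveRoot ξ d) (hd : Odd d) (hneg : (-1 : K) ^ s = 1)
    (htwo : (2 : K) ^ s = 1) (h : ∀ j ∈ Icc 1 ((d - 1) / 2), (-(ξ ^ j + ξ ^ (d - j))) ^ s = 1)
    {θ : K} (hθ : θ ^ d = 1) : (θ + θ⁻¹) ^ s = 1 := by
  have : NeZero d := ⟨hd.pos.ne'⟩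
  have hpow (x : K) : (-x) ^ s = x ^ s := by rw [neg_pow, hneg, one_mul]
  obtain ⟨j, hjd, rfl⟩ := hξ.eq_pow_of_pow_eq_one hθ
  rw [← hξ.pow_sub_eq_inv hjd.le]
  obtain ⟨m, rfl⟩ := hd
  rcases Nat.eq_zero_or_pos j with rfl | hj0
  · simpa [hξ.pow_eq_one, one_add_one_eq_two] using htwo
  rcases le_or_gt j m with hjm | hjm
  · rw [← hpow]
    exact h j (by simp only [mem_Icc]; omega)
  · have := h (2 * m + 1 - j) (by simp only [mem_Icc]; omega)
    rwa [Nat.sub_sub_self hjd.le, add_comm, hpow] at this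

end IsPrimitiveRoot

theorem add_one_div_pow_eq_one_of_pow_two_mul_eq_one {K : Type*} [Field K] {d s : ℕ} (hd : Odd d)
    (hneg : (-1 : K) ^ s = 1) (H : ∀ θ : K, θ ^ d = 1 → (θ + θ⁻¹) ^ s = 1) {η : K}
    (hη : η ^ (2 * d) = 1) : (η + 1 / η) ^ s = 1 := by
  rw [one_div]
  have hsq : η ^ d * η ^ d = 1 := by rw [← pow_add, ← two_mul, hη]
  rcases mul_self_eq_one_iff.mp hsq with h | h
  · exact H η h
  · have := H (-η) (by rw [hd.neg_pow, h, neg_neg])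
    rwa [inv_neg, ← neg_add, neg_pow, hneg, one_mul] at this

theorem stmt_10_general {F : Type*} [Field F] [Fintype F] {q p : ℕ} (hq : Fintype.card F = q)
    [CharP F p]
    {s d : ℕ}
    (hsd : s * d = q - 1)
    (hodd : Odd d)
    (a : ℕ → ℝ)
    (hadef : ∀ n, a n = ∑ t ∈ Finset.Icc 1 ((d - 1) / 2),
      (2 * Real.cos (Real.pi * (2 * (t : ℝ) - 1) / d)) ^ n)
    (hps : (2 : ℕ) ^ s ≡ 1 [MOD p])
    (A : ℕ → ℤ) (hA : ∀ n, (A n : ℝ) = a n)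
    (hcong : ∀ n, A n ≡ A (n + s) [ZMOD p]) :
    ∀ η : AlgebraicClosure F, η ^ (2 * d) = 1 → (η + 1 / η) ^ s = 1 := by
  subst hq
  obtain ⟨ξ₀, hξ₀⟩ := FiniteField.exists_isPrimitiveRoot_of_dvd (Dvd.intro_left s hsd)
  set ξ := algebraMap F (AlgebraicClosure F) ξ₀
  have hξ : IsPrimitiveRoot ξ d := hξ₀.map_of_injective (algebraMap F _).injective
  have hneg : (-1 : AlgebraicClosure F) ^ s = 1 := by
    simpa using congrArg (algebraMap F (AlgebraicClosure F))
      (FiniteField.neg_one_pow_eq_one_of_mul_eq hsd hodd)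
  have htwo : (2 : AlgebraicClosure F) ^ s = 1 := by
    exact_mod_cast (CharP.natCast_eq_natCast _ p).mpr hps
  have hsums (n : ℕ) : ∑ j ∈ Icc 1 ((d - 1) / 2), (-(ξ ^ j + ξ ^ (d - j))) ^ n = A n := by
    rw [← aeval_cosPowerSumPoly]
    refine aeval_eq_intCast_of_isPrimitiveRoot hodd.pos
      (Complex.isPrimitiveRoot_exp d hodd.pos.ne') hξ ?_
    rw [aeval_exp_cosPowerSumPoly hodd, ← hadef, ← hA, Complex.ofReal_intCast]
  refine fun η ↦ add_one_div_pow_eq_one_of_pow_two_mul_eq_one hodd hneg fun θ ↦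
    hξ.add_inv_pow_eq_one hodd hneg htwo fun j ↦ hξ.neg_pow_add_pow_sub_pow_eq_one fun n ↦ ?_
  rw [hsums, hsums, (CharP.intCast_eq_intCast _ p).mpr (hcong n)]

/-- Let q = p^⋆ and s, d, r, e > 0 with s·d = q−1, gcd(r, s) = gcd(e, d) = 1, d odd.
Define a_n := Σ_{t=1}^{(d−1)/2} (2·cos(π(2t−1)/d))^n. Suppose 2^s ≡ 1 (mod p) and
each a_n is an integer with a_n ≡ a_{n+s} (mod p). Then every η ∈ μ_{2d} in an
algebraic closure of F_q satisfies (η + 1/η)^s = 1. -/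
theorem stmt_10 {F : Type*} [Field F] [Fintype F] {q p : ℕ} (hq : Fintype.card F = q)
    (hp : p.Prime) [CharP F p]
    {s d r e : ℕ} (hs : 0 < s) (hd : 0 < d) (hr : 0 < r) (he : 0 < e)
    (hsd : s * d = q - 1) (hrs : Nat.gcd r s = 1) (hed : Nat.gcd e d = 1)
    (hodd : Odd d)
    (a : ℕ → ℝ)
    (hadef : ∀ n, a n = ∑ t ∈ Finset.Icc 1 ((d - 1) / 2),
      (2 * Real.cos (Real.pi * (2 * (t : ℝ) - 1) / d)) ^ n)
    (hps : (2 : ℕ) ^ s ≡ 1 [MOD p])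
    (A : ℕ → ℤ) (hA : ∀ n, (A n : ℝ) = a n)
    (hcong : ∀ n, A n ≡ A (n + s) [ZMOD p]) :
    ∀ η : AlgebraicClosure F, η ^ (2 * d) = 1 → (η + 1 / η) ^ s = 1 :=
  stmt_10_general hq hsd hodd a hadef hps A hA hcong
end

section
/- Let q be a prime power and let u > r > 0 be integers such that f(x) := x^u + x^r is a permutation polynomial of F_q. Put s := gcd(u−r, q−1) and d := (q−1)/s. Then gcd(r, s) = 1 and d is odd. -/
open Polynomial

/-- Let q be a prime power and u > r > 0 with f(x) := x^u + x^r a permutation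
polynomial of F_q. Put s := gcd(u−r, q−1) and d := (q−1)/s. Then gcd(r, s) = 1 and
d is odd. -/
theorem stmt_11 {F : Type*} [Field F] [Fintype F] {q : ℕ} (hq : Fintype.card F = q)
    {u r : ℕ} (hru : r < u) (hr : 0 < r)
    (hperm : Function.Bijective (fun c : F => (X ^ u + X ^ r : F[X]).eval c)) :
    Nat.gcd r (Nat.gcd (u - r) (q - 1)) = 1 ∧
      Odd ((q - 1) / Nat.gcd (u - r) (q - 1)) := by
  classical
  have hinj : ∀ a b : F, a ^ u + a ^ r = b ^ u + b ^ r → a = b := by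
    intro a b h
    apply hperm.injective
    simpa using h
  set m := u - r with hm
  have hm0 : 0 < m := Nat.sub_pos_of_lt hru
  have hu : u = r + m := by omega
  set s := Nat.gcd m (q - 1) with hs
  have hF2 : 2 ≤ Fintype.card F := Fintype.one_lt_card
  have hq2 : 2 ≤ q := hq ▸ hF2
  have hq1 : Fintype.card Fˣ = q - 1 := by rw [Fintype.card_units, hq]
  have hq1pos : 0 < q - 1 := by omega
  have hsdvd : s ∣ q - 1 := Nat.gcd_dvd_right m (q - 1)
  have hspos : 0 < s := Nat.gcd_pos_of_pos_left _ hm0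
  obtain ⟨g, hg⟩ := IsCyclic.exists_generator (α := Fˣ)
  have hog : orderOf g = q - 1 := by
    rw [orderOf_eq_card_of_forall_mem_zpowers hg, Nat.card_eq_fintype_card, hq1]
  constructor
  · -- gcd(r, s) = 1
    by_contra hne
    set t := Nat.gcd r s with ht
    have htpos : 0 < t := Nat.gcd_pos_of_pos_left _ hr
    have ht1 : 1 < t := by omega
    have htd : t ∣ q - 1 := (Nat.gcd_dvd_right r s).trans hsdvd
    set ζ : Fˣ := g ^ ((q - 1) / t) with hζ
    have hoζ : orderOf ζ = t := by
      rw [hζ, ← hog]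
      exact orderOf_pow_orderOf_div (by rw [hog]; omega) (hog ▸ htd)
    have hζr : ζ ^ r = 1 := orderOf_dvd_iff_pow_eq_one.1 (hoζ ▸ Nat.gcd_dvd_left r s)
    have hζu : ζ ^ u = 1 := by
      have htu : t ∣ u := by
        rw [hu]
        exact Nat.dvd_add (Nat.gcd_dvd_left r s)
          ((Nat.gcd_dvd_right r s).trans (Nat.gcd_dvd_left m (q - 1)))
      exact orderOf_dvd_iff_pow_eq_one.1 (hoζ ▸ htu)
    have hval : (ζ : F) = 1 := by
      apply hinj
      have h1 : (ζ : F) ^ u = 1 := by rw [← Units.val_pow_eq_pow_val, hζu, Units.val_one]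
      have h2 : (ζ : F) ^ r = 1 := by rw [← Units.val_pow_eq_pow_val, hζr, Units.val_one]
      rw [h1, h2, one_pow, one_pow]
    have : ζ = 1 := Units.ext (by simpa using hval)
    rw [this, orderOf_one] at hoζ
    omega
  · -- d is odd
    by_contra hodd
    rw [Nat.not_odd_iff_even] at hodd
    obtain ⟨e, he⟩ := hodd
    have hqd : q - 1 = s * ((q - 1) / s) := (Nat.mul_div_cancel' hsdvd).symm
    have hepos : 0 < e := by
      rcases Nat.eq_zero_or_pos e with h | h
      · rw [h] at he; rw [he] at hqd; omega
      · exact h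
    have hq1eq : q - 1 = s * e * 2 := by rw [hqd, he]; ring
    set w : Fˣ := g ^ (s * e) with hw
    have hw2 : (w : F) ^ 2 = 1 := by
      rw [← Units.val_pow_eq_pow_val, hw, ← pow_mul, ← hq1eq, ← hog, pow_orderOf_eq_one,
        Units.val_one]
    have hwne : (w : F) ≠ 1 := by
      intro h
      have hw1 : w = 1 := Units.ext (by simpa using h)
      rw [hw] at hw1
      have hdd := orderOf_dvd_of_pow_eq_one hw1
      rw [hog] at hdd
      have hle := Nat.le_of_dvd (by positivity) hdd
      omega
    have hwneg : (w : F) = -1 := (sq_eq_one_iff.1 hw2).resolve_left hwne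
    -- Bezout: y := g^e, x := y^A with x^m = y^s = w = -1
    set A := Nat.gcdA m (q - 1) with hA
    set B := Nat.gcdB m (q - 1) with hB
    have hbez : (s : ℤ) = (m : ℤ) * A + ((q - 1 : ℕ) : ℤ) * B := Nat.gcd_eq_gcd_ab m (q - 1)
    set y : Fˣ := g ^ e with hy
    have hyq : y ^ ((q - 1 : ℕ) : ℤ) = 1 := by
      rw [zpow_natCast, hy, ← pow_mul, mul_comm, pow_mul, ← hog, pow_orderOf_eq_one, one_pow]
    set x : Fˣ := y ^ A with hx
    have hxm : x ^ m = w := by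
      have h1 : x ^ (m : ℤ) = y ^ ((m : ℤ) * A) := by rw [hx, ← zpow_mul, mul_comm]
      have h2 : y ^ ((s : ℕ) : ℤ) = y ^ ((m : ℤ) * A) := by
        rw [hbez, zpow_add, zpow_mul y (((q - 1 : ℕ) : ℤ)) B, hyq, one_zpow, mul_one]
      have h3 : x ^ m = y ^ s := by
        rw [← zpow_natCast x m, ← zpow_natCast y s, h1, h2]
      rw [h3, hy, ← pow_mul, mul_comm e s, hw]
    have hxF : (x : F) ^ m = -1 := by rw [← Units.val_pow_eq_pow_val, hxm, hwneg]
    have hx0 : (x : F) = 0 := by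
      apply hinj
      rw [hu, pow_add, hxF, zero_pow (by omega : r + m ≠ 0), zero_pow (by omega : r ≠ 0)]
      ring
    exact x.ne_zero hx0
end

section
/- Let q = q_0^m where q_0 is a prime power, m is even, and d is a positive integer dividing q_0 + 1. Let ℓ > 0 be an integer and put d_0 := d/gcd(d, ℓ−1). Then for every ζ ∈ μ_d with ζ ≠ 1 (note μ_d ⊆ F_q since d divides q−1), one has h_ℓ(ζ)^{q_0} = h_ℓ(ζ)/ζ^{ℓ−1}, and consequently h_ℓ(ζ)^{d_0} lies in the subfield F_{q_0} of F_q of order q_0. -/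
/-!
Since `d ∣ q₀ + 1`, the Frobenius `x ↦ x ^ q₀` of `F` over `K` sends `ζ` to `ζ⁻¹`, so
`h_ℓ(ζ) ^ q₀ = h_ℓ(ζ⁻¹)`, and reversing the order of summation gives
`h_ℓ(ζ⁻¹) = h_ℓ(ζ) / ζ ^ (ℓ - 1)`. As `d ∣ (ℓ - 1) d₀`, the power `h_ℓ(ζ) ^ d₀` is then fixed
by the Frobenius, and its fixed points are exactly `K`: they are the at most `q₀` roots of
`X ^ q₀ - X`, and `K` already supplies `q₀` of them.
-/

open Polynomial Finset

theorem Subfield.mem_iff_pow_card_eq_self {F : Type*} [Field F] (K : Subfield F) [Finite K]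
    {x : F} : x ∈ K ↔ x ^ Nat.card K = x := by
  have := Fintype.ofFinite K
  rw [Nat.card_eq_fintype_card]
  have hsplits : Splits (X ^ Fintype.card K - X : K[X]) := by
    rw [splits_iff_card_roots, FiniteField.roots_X_pow_card_sub_X, ← Finset.card_def,
      Finset.card_univ, FiniteField.X_pow_card_sub_X_natDegree_eq _ Fintype.one_lt_card]
  have hroots := FiniteField.roots_X_pow_card_sub_X K ▸ hsplits.roots_map K.subtype ▸
    Multiset.mem_map (b := x)
  simpa [sub_eq_zero, iff_comm, FiniteField.X_pow_card_sub_X_ne_zero F Fintype.one_lt_card]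
    using hroots

theorem geom_sum_inv_mul_pow_pred {K : Type*} [Field K] {x : K} (hx : x ≠ 0) (n : ℕ) :
    (∑ i ∈ range n, x⁻¹ ^ i) * x ^ (n - 1) = ∑ i ∈ range n, x ^ i := by
  rw [sum_mul, ← sum_range_reflect]
  refine sum_congr rfl fun i hi => ?_
  have hsplit : x ^ (n - 1) = x ^ (n - 1 - i) * x ^ i := by
    rw [← pow_add, Nat.sub_add_cancel (by grind)]
  rw [inv_pow, hsplit, inv_mul_cancel_left₀ (pow_ne_zero _ hx)]

theorem Nat.dvd_mul_div_gcd (a b : ℕ) : a ∣ b * (a / Nat.gcd a b) := by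
  rw [← Nat.mul_div_assoc b (Nat.gcd_dvd_left a b), Nat.gcd_comm]
  exact Nat.dvd_lcm_right b a

section FiniteSubfield

variable {F : Type*} [Field F] (K : Subfield F) [Finite K] {ζ : F}

theorem geom_sum_pow_card_eq_div (hζ : ζ ^ (Nat.card K + 1) = 1) (ℓ : ℕ) :
    (∑ i ∈ range ℓ, ζ ^ i) ^ Nat.card K = (∑ i ∈ range ℓ, ζ ^ i) / ζ ^ (ℓ - 1) := by
  have := Fintype.ofFinite K
  rw [Nat.card_eq_fintype_card] at hζ ⊢
  have hζ0 : ζ ≠ 0 := by rintro rfl; simp at hζ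
  have hζq : ζ ^ Fintype.card K = ζ⁻¹ := eq_inv_of_mul_eq_one_left (by rwa [← pow_succ])
  calc (∑ i ∈ range ℓ, ζ ^ i) ^ Fintype.card K
      = ∑ i ∈ range ℓ, (ζ ^ Fintype.card K) ^ i :=
        RingHom.map_geom_sum ζ ℓ (FiniteField.frobeniusAlgHom K F).toRingHom
    _ = (∑ i ∈ range ℓ, ζ ^ i) / ζ ^ (ℓ - 1) := by
        rw [hζq, eq_div_iff (pow_ne_zero _ hζ0), geom_sum_inv_mul_pow_pred hζ0]

theorem geom_sum_pow_mem (hζ : ζ ^ (Nat.card K + 1) = 1) {ℓ e : ℕ}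
    (he : ζ ^ ((ℓ - 1) * e) = 1) : (∑ i ∈ range ℓ, ζ ^ i) ^ e ∈ K := by
  rw [K.mem_iff_pow_card_eq_self, ← pow_mul, mul_comm, pow_mul,
    geom_sum_pow_card_eq_div K hζ, div_pow, ← pow_mul, he, div_one]

end FiniteSubfield

theorem stmt_13_general {F : Type*} [Field F] [Fintype F] {q0 d ℓ : ℕ}
    (hdq : d ∣ q0 + 1)
    (d0 : ℕ) (hd0 : d0 = d / Nat.gcd d (ℓ - 1))
    (K : Subfield F) (hK : Nat.card K = q0) :
    ∀ ζ : F, ζ ^ d = 1 → ζ ≠ 1 →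
      ((∑ i ∈ Finset.range ℓ, X ^ i : F[X]).eval ζ) ^ q0 =
        ((∑ i ∈ Finset.range ℓ, X ^ i : F[X]).eval ζ) / ζ ^ (ℓ - 1) ∧
      ((∑ i ∈ Finset.range ℓ, X ^ i : F[X]).eval ζ) ^ d0 ∈ K := by
  intro ζ hζd _
  have hζK : ζ ^ (Nat.card K + 1) = 1 := by
    obtain ⟨k, hk⟩ := hdq
    rw [hK, hk, pow_mul, hζd, one_pow]
  have hζd0 : ζ ^ ((ℓ - 1) * d0) = 1 := by
    obtain ⟨k, hk⟩ := hd0 ▸ Nat.dvd_mul_div_gcd d (ℓ - 1)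
    rw [hk, pow_mul, hζd, one_pow]
  simp only [eval_finsetSum, eval_pow, eval_X]
  exact ⟨hK ▸ geom_sum_pow_card_eq_div K hζK ℓ, geom_sum_pow_mem K hζK hζd0⟩

/-- Let q = q_0^m with q_0 a prime power, m even, and d > 0 dividing q_0 + 1. Let
ℓ > 0 and d_0 := d/gcd(d, ℓ−1). Then for every ζ ∈ μ_d with ζ ≠ 1 (μ_d ⊆ F_q since
d ∣ q−1), one has h_ℓ(ζ)^{q_0} = h_ℓ(ζ)/ζ^{ℓ−1}, and h_ℓ(ζ)^{d_0} lies in the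
subfield of F_q of order q_0. -/
theorem stmt_13 {F : Type*} [Field F] [Fintype F] {q q0 m d ℓ : ℕ}
    (hq : Fintype.card F = q) (hq0 : IsPrimePow q0) (hme : Even m) (hqm : q = q0 ^ m)
    (hd : 0 < d) (hdq : d ∣ q0 + 1) (hl : 0 < ℓ)
    (d0 : ℕ) (hd0 : d0 = d / Nat.gcd d (ℓ - 1))
    (K : Subfield F) (hK : Nat.card K = q0) :
    ∀ ζ : F, ζ ^ d = 1 → ζ ≠ 1 →
      ((∑ i ∈ Finset.range ℓ, X ^ i : F[X]).eval ζ) ^ q0 =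
        ((∑ i ∈ Finset.range ℓ, X ^ i : F[X]).eval ζ) / ζ ^ (ℓ - 1) ∧
      ((∑ i ∈ Finset.range ℓ, X ^ i : F[X]).eval ζ) ^ d0 ∈ K :=
  stmt_13_general hdq d0 hd0 K hK
end

section
/- Let p be a prime and d, m, r, s positive integers with p ≡ 1 (mod d), d dividing m, d odd, q = p^m, and s = (q−1)/d. If gcd(r, s) = 1, then for all integers k and e one has gcd(2r + (k−1)es, d) = 1. (In particular, the condition gcd(2r + (k−1)es, d) = 1 is superfluous in the criteria of Akbary–Wang type under these hypotheses.) -/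
/-!
If `d ∣ p - 1` and `d ∣ m`, then `p ^ m - 1 = (p - 1) * (1 + p + ⋯ + p ^ (m - 1))` and the
geometric sum is `≡ m ≡ 0 (mod d)`, so `d ^ 2 ∣ q - 1` and hence `d ∣ s`. Therefore `r` is
coprime to `d`, and `2 r + (k - 1) e s ≡ 2 r (mod d)` is coprime to the odd number `d`.
-/

theorem mul_self_dvd_pow_sub_one {R : Type*} [CommRing R] {d a : R} {m : ℕ}
    (ha : d ∣ a - 1) (hm : d ∣ (m : R)) : d * d ∣ a ^ m - 1 := by
  rw [← geom_sum_mul]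
  refine mul_dvd_mul ?_ ha
  have hsum : ∑ i ∈ Finset.range m, a ^ i = ∑ i ∈ Finset.range m, (a ^ i - 1) + m := by
    simp [Finset.sum_sub_distrib]
  rw [hsum]
  exact dvd_add (Finset.dvd_sum fun i _ => ha.trans (sub_one_dvd_pow_sub_one a i)) hm

theorem Nat.mul_self_dvd_pow_sub_one {d p m : ℕ} (hp : p ≡ 1 [MOD d]) (hm : d ∣ m) :
    d * d ∣ p ^ m - 1 := by
  have hz := _root_.mul_self_dvd_pow_sub_one (Nat.modEq_iff_dvd.mp hp.symm)
    (Int.natCast_dvd_natCast.mpr hm)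
  have hmod : p ^ m ≡ 1 [MOD d * d] := by
    rw [← Int.natCast_modEq_iff, Int.modEq_iff_dvd, dvd_sub_comm]
    exact_mod_cast hz
  exact Nat.dvd_of_mod_eq_zero (Nat.sub_mod_eq_zero_of_mod_eq hmod)

theorem stmt_14_general {p d m r s q : ℕ}
    (hcong : p ≡ 1 [MOD d]) (hdm : d ∣ m) (hodd : Odd d)
    (hq : q = p ^ m) (hs : s = (q - 1) / d) (hrs : Nat.gcd r s = 1) :
    ∀ k e : ℤ, Int.gcd (2 * (r : ℤ) + (k - 1) * e * (s : ℤ)) (d : ℤ) = 1 := by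
  intro k e
  obtain ⟨s', hs'⟩ : d ∣ s :=
    hs ▸ Nat.dvd_div_of_mul_dvd (hq ▸ Nat.mul_self_dvd_pow_sub_one hcong hdm)
  have h2rd : IsCoprime (2 * r : ℤ) d := by
    rw [Int.isCoprime_iff_gcd_eq_one]
    exact_mod_cast (Nat.coprime_two_left.mpr hodd).mul_left
      (Nat.Coprime.coprime_dvd_right ⟨s', hs'⟩ hrs)
  have hreduce : 2 * (r : ℤ) + (k - 1) * e * s = 2 * r + (k - 1) * e * s' * d := by
    rw [hs']
    push_cast
    ring
  rw [hreduce, ← Int.isCoprime_iff_gcd_eq_one]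
  exact h2rd.add_mul_right_left _

/-- Let p be prime and d, m, r, s > 0 with p ≡ 1 (mod d), d ∣ m, d odd, q = p^m,
s = (q−1)/d. If gcd(r, s) = 1, then for all integers k and e,
gcd(2r + (k−1)es, d) = 1. -/
theorem stmt_14 {p d m r s q : ℕ} (hp : p.Prime) (hd : 0 < d) (hm : 0 < m)
    (hr : 0 < r) (hs0 : 0 < s) (hcong : p ≡ 1 [MOD d]) (hdm : d ∣ m) (hodd : Odd d)
    (hq : q = p ^ m) (hs : s = (q - 1) / d) (hrs : Nat.gcd r s = 1) :
    ∀ k e : ℤ, Int.gcd (2 * (r : ℤ) + (k - 1) * e * (s : ℤ)) (d : ℤ) = 1 :=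
  stmt_14_general hcong hdm hodd hq hs hrs
end
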